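/- For any G ∈ L²([0,T]; L(X)) there exists a unique strongly continuous operator-valued function 𝔗 : Δ → L(X), Δ = {(t,s) : 0 ≤ s ≤ t ≤ T}, such that 𝔗(t,t) = I for all t ∈ [0,T], 𝔗(t,r)𝔗(r,s) = 𝔗(t,s) for 0 ≤ s ≤ r ≤ t ≤ T, and for all y ∈ X, 𝔗(t,s;G)y = 𝔘(t−s)y + ∫ₛᵗ 𝔘(t−r)G(r)𝔗(r,s;G)y dr = 𝔘(t−s)y + ∫ₛᵗ 𝔗(t,r;G)G(r)𝔘(r−s)y dr. -/

import Mathlib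

open Filter MeasureTheory

/-- `G : [0,T] → L(X)` is strongly measurable and square integrable:
`G ∈ L²([0,T]; L(X))`. -/
def IsL2OperatorValued {X : Type*} [NormedAddCommGroup X] [NormedSpace ℝ X]
    (T : ℝ) (G : ℝ → (X →L[ℝ] X)) : Prop :=
  (∀ x : X, AEStronglyMeasurable (fun t => G t x) (volume.restrict (Set.Ioc 0 T))) ∧
  MemLp (fun t => ‖G t‖) 2 (volume.restrict (Set.Ioc 0 T))

/-- The defining properties of the evolution operator `𝔗(·,·;G)` generated by the semigroup
`𝔘` perturbed by `G`: strong continuity on `Δ = {(t,s) : 0 ≤ s ≤ t ≤ T}`, the identity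
property on the diagonal, the cocycle property, and the two integral equations. -/
def IsEvolutionOperator {X : Type*} [NormedAddCommGroup X] [NormedSpace ℝ X]
    (𝔘 : ℝ → (X →L[ℝ] X)) (T : ℝ) (G : ℝ → (X →L[ℝ] X))
    (𝔗 : ℝ → ℝ → (X →L[ℝ] X)) : Prop :=
  (∀ y : X, ContinuousOn (fun p : ℝ × ℝ => 𝔗 p.1 p.2 y)
    {p : ℝ × ℝ | 0 ≤ p.2 ∧ p.2 ≤ p.1 ∧ p.1 ≤ T}) ∧
  (∀ t : ℝ, t ∈ Set.Icc 0 T → 𝔗 t t = 1) ∧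
  (∀ s r t : ℝ, 0 ≤ s → s ≤ r → r ≤ t → t ≤ T → 𝔗 t r ∘L 𝔗 r s = 𝔗 t s) ∧
  (∀ s t : ℝ, 0 ≤ s → s ≤ t → t ≤ T → ∀ y : X,
    𝔗 t s y = 𝔘 (t - s) y + ∫ r in s..t, 𝔘 (t - r) (G r (𝔗 r s y))) ∧
  (∀ s t : ℝ, 0 ≤ s → s ≤ t → t ≤ T → ∀ y : X,
    𝔗 t s y = 𝔘 (t - s) y + ∫ r in s..t, 𝔗 t r (G r (𝔘 (r - s) y)))

/-!
Let `M` bound `‖𝔘‖` on `[0, T]` (Banach–Steinhaus) and `k = ‖G‖ ∈ L¹(0, T)`. The Volterra operator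
`(V u) (t, s) = ∫ r in s..t, 𝔘 (t - r) (G r (u (r, s)))` acts on `C(Δ, X)`, and iterating the
bound `‖V u (t, s)‖ ≤ M ∫ r in s..t, k r ‖u (r, s)‖` with the identity
`∫ r in s..t, k r (∫ s..r, k) ^ n = (∫ s..t, k) ^ (n + 1) / (n + 1)` gives
`‖Vⁿ‖ ≤ (M ∫ 0..T, k) ^ n / n!`. Hence `∑ Vⁿ` converges, and `𝔗 (t, s) y` is the value at `(t, s)`
of `(∑ Vⁿ) ((t, s) ↦ 𝔘 (t - s) y)`, which solves the forward equation. The same factorial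
estimate shows that the forward equation has at most one continuous solution for each `s`
(a Grönwall argument). Everything else follows from this uniqueness: `t ↦ 𝔗 (t, r) 𝔗 (r, s) y`
and `t ↦ 𝔗 (t, s) y` solve the same equation from time `r` by the semigroup law, and
`t ↦ 𝔘 (t - s) y + ∫ r in s..t, 𝔗 (t, r) (G r (𝔘 (r - s) y))` solves it by Fubini on the
triangle `s ≤ σ ≤ ρ ≤ t`.
-/

section

open Set Topology
open scoped Nat

section OperatorFamilies

variable {𝕜 : Type*} [NontriviallyNormedField 𝕜] {E F : Type*}
  [NormedAddCommGroup E] [NormedSpace 𝕜 E] [NormedAddCommGroup F] [NormedSpace 𝕜 F]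
  {α : Type*} [MeasurableSpace α] {μ : Measure α}

theorem MeasureTheory.AEStronglyMeasurable.clm_apply_of_forall {A : α → E →L[𝕜] F}
    (hA : ∀ x, AEStronglyMeasurable (fun a => A a x) μ) {v : α → E}
    (hv : AEStronglyMeasurable v μ) : AEStronglyMeasurable (fun a => A a (v a)) μ := by
  obtain ⟨w, hw, hvw⟩ := hv
  have hsimple (n : ℕ) : AEStronglyMeasurable (fun a => A a (hw.approx n a)) μ := by
    have hsum : (fun a => A a (hw.approx n a)) = fun a => ∑ c ∈ (hw.approx n).range,
        ((hw.approx n) ⁻¹' {c}).indicator (fun a => A a c) a := by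
      funext a
      rw [Finset.sum_eq_single_of_mem _ (SimpleFunc.mem_range_self _ a)
        fun c _ hc => indicator_of_notMem (fun h => hc h.symm) _]
      exact (indicator_of_mem rfl _).symm
    rw [hsum]
    exact Finset.aestronglyMeasurable_fun_sum _ fun c _ =>
      (hA c).indicator ((hw.approx n).measurableSet_fiber c)
  refine (aestronglyMeasurable_of_tendsto_ae atTop hsimple
    (ae_of_all _ fun a => ((A a).continuous.tendsto _).comp (hw.tendsto_approx a))).congr ?_
  filter_upwards [hvw] with a ha
  rw [ha]

theorem MeasureTheory.Integrable.clm_apply_of_forall {A : α → E →L[𝕜] F}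
    (hA : ∀ x, AEStronglyMeasurable (fun a => A a x) μ) {C : ℝ} (hC : ∀ᵐ a ∂μ, ‖A a‖ ≤ C)
    {v : α → E} (hv : Integrable v μ) : Integrable (fun a => A a (v a)) μ := by
  refine (hv.norm.const_mul C).mono' (hv.1.clm_apply_of_forall hA) ?_
  filter_upwards [hC] with a ha
  exact (A a).le_of_opNorm_le ha _

theorem Filter.Tendsto.clm_apply_of_eventually_norm_le {ι : Type*} {l : Filter ι}
    {A : ι → E →L[𝕜] F} {A₀ : E →L[𝕜] F} {x : ι → E} {x₀ : E} {C : ℝ}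
    (hA : Tendsto (fun i => A i x₀) l (𝓝 (A₀ x₀))) (hC : ∀ᶠ i in l, ‖A i‖ ≤ C)
    (hx : Tendsto x l (𝓝 x₀)) : Tendsto (fun i => A i (x i)) l (𝓝 (A₀ x₀)) := by
  rw [tendsto_iff_norm_sub_tendsto_zero] at hA hx ⊢
  refine squeeze_zero' (Eventually.of_forall fun i => norm_nonneg _) ?_
    (by simpa using (hx.const_mul C).add hA)
  filter_upwards [hC] with i hi
  calc ‖A i (x i) - A₀ x₀‖ = ‖A i (x i - x₀) + (A i x₀ - A₀ x₀)‖ := by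
        rw [map_sub]; abel_nf
    _ ≤ C * ‖x i - x₀‖ + ‖A i x₀ - A₀ x₀‖ :=
        (norm_add_le _ _).trans (add_le_add_left ((A i).le_of_opNorm_le hi _) _)

end OperatorFamilies

theorem AbsolutelyContinuousOnInterval.pow {f : ℝ → ℝ} {a b : ℝ}
    (hf : AbsolutelyContinuousOnInterval f a b) (n : ℕ) :
    AbsolutelyContinuousOnInterval (f ^ n) a b := by
  induction n with
  | zero =>
    rw [pow_zero]
    exact ((LipschitzWith.const (1 : ℝ)).lipschitzOnWith (s := uIcc a b))
      |>.absolutelyContinuousOnInterval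
  | succ n ih => simpa [pow_succ] using ih.mul hf

/-- The primitive of `k` is only differentiable almost everywhere, so this goes through the
fundamental theorem of calculus for absolutely continuous functions. -/
theorem integral_mul_pow_primitive {k : ℝ → ℝ} {a b : ℝ}
    (hk : IntervalIntegrable k volume a b) (n : ℕ) :
    ∫ x in a..b, k x * (∫ r in a..x, k r) ^ n = (∫ r in a..b, k r) ^ (n + 1) / (n + 1) := by
  have hP : AbsolutelyContinuousOnInterval (fun x => ∫ r in a..x, k r) a b :=
    hk.absolutelyContinuousOnInterval_intervalIntegral left_mem_uIcc
  have hderiv : ∀ᵐ x, x ∈ uIoc a b → deriv ((fun x => ∫ r in a..x, k r) ^ (n + 1)) x =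
      (n + 1) * (k x * (∫ r in a..x, k r) ^ n) := by
    filter_upwards [hk.ae_hasDerivAt_integral] with x hx hxab
    rw [((hx (uIoc_subset_uIcc hxab) a left_mem_uIcc).pow (n + 1)).deriv]
    push_cast
    ring
  have hftc := (hP.pow (n + 1)).integral_deriv_eq_sub
  rw [intervalIntegral.integral_congr_ae hderiv, intervalIntegral.integral_const_mul] at hftc
  simp only [Pi.pow_apply, intervalIntegral.integral_same, zero_pow n.succ_ne_zero,
    sub_zero] at hftc
  rw [← hftc]
  field_simp

theorem le_mul_pow_div_factorial_of_le_integral {k : ℝ → ℝ} {f : ℕ → ℝ → ℝ} {a b B c : ℝ}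
    (hk : IntervalIntegrable k volume a b) (hk0 : ∀ r ∈ Icc a b, 0 ≤ k r) (hc : 0 ≤ c)
    (hf : ∀ n, ContinuousOn (f n) (Icc a b)) (hf0 : ∀ t ∈ Icc a b, f 0 t ≤ B)
    (hf_succ : ∀ n, ∀ t ∈ Icc a b, f (n + 1) t ≤ c * ∫ r in a..t, k r * f n r) (n : ℕ) :
    ∀ t ∈ Icc a b, f n t ≤ B * (c * ∫ r in a..t, k r) ^ n / n ! := by
  induction n with
  | zero => simpa using hf0
  | succ n ih =>
    intro t ht
    have hsub : uIcc a t ⊆ Icc a b := by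
      rw [uIcc_of_le ht.1]; exact Icc_subset_Icc_right ht.2
    have hkt : IntervalIntegrable k volume a t :=
      hk.mono_set (by rwa [uIcc_of_le (ht.1.trans ht.2)])
    have hP : ContinuousOn (fun r => ∫ u in a..r, k u) (uIcc a t) :=
      intervalIntegral.continuousOn_primitive_interval' hkt left_mem_uIcc
    calc f (n + 1) t ≤ c * ∫ r in a..t, k r * f n r := hf_succ n t ht
      _ ≤ c * ∫ r in a..t, (B * c ^ n / n !) * (k r * (∫ u in a..r, k u) ^ n) := by
        gcongr
        refine intervalIntegral.integral_mono_on ht.1 (hkt.mul_continuousOn ((hf n).mono hsub))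
          ((hkt.mul_continuousOn (hP.pow n)).const_mul _) fun r hr => ?_
        have hr' : r ∈ Icc a b := ⟨hr.1, hr.2.trans ht.2⟩
        calc k r * f n r ≤ k r * (B * (c * ∫ u in a..r, k u) ^ n / n !) :=
              mul_le_mul_of_nonneg_left (ih r hr') (hk0 r hr')
          _ = _ := by rw [mul_pow]; ring
      _ = B * (c * ∫ r in a..t, k r) ^ (n + 1) / (n + 1)! := by
        rw [intervalIntegral.integral_const_mul, integral_mul_pow_primitive hkt,
          Nat.factorial_succ]
        push_cast
        field_simp
        ring

theorem nonpos_of_le_const_mul_integral {k f : ℝ → ℝ} {a b c : ℝ}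
    (hk : IntervalIntegrable k volume a b) (hk0 : ∀ r ∈ Icc a b, 0 ≤ k r) (hc : 0 ≤ c)
    (hf : ContinuousOn f (Icc a b)) (hle : ∀ t ∈ Icc a b, f t ≤ c * ∫ r in a..t, k r * f r) :
    ∀ t ∈ Icc a b, f t ≤ 0 := by
  intro t ht
  obtain ⟨B, hB⟩ := isCompact_Icc.exists_bound_of_continuousOn hf
  have hbound := le_mul_pow_div_factorial_of_le_integral (f := fun _ => f) hk hk0 hc
    (fun _ => hf) (fun t ht => (le_abs_self _).trans (hB t ht)) (fun _ => hle)
  have hlim : Tendsto (fun n => B * (c * ∫ r in a..t, k r) ^ n / n !) atTop (𝓝 0) := by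
    simpa [mul_div_assoc] using (FloorSemiring.tendsto_pow_div_factorial_atTop _).const_mul B
  exact ge_of_tendsto' hlim fun n => hbound n t ht

section ParametricIntegral

variable {E : Type*} [NormedAddCommGroup E] [NormedSpace ℝ E]

theorem continuousOn_intervalIntegral_of_dominated {P : Type*} [TopologicalSpace P]
    [FirstCountableTopology P] {S : Set P} {σ κ : P → ℝ} {l u : ℝ} {W : P → ℝ → E}
    {b : ℝ → ℝ} (hσ : ContinuousOn σ S) (hκ : ContinuousOn κ S)
    (hσκ : ∀ p ∈ S, l ≤ σ p ∧ σ p ≤ κ p ∧ κ p ≤ u)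
    (hWm : ∀ p ∈ S, AEStronglyMeasurable (W p) (volume.restrict (Ioc (σ p) (κ p))))
    (hb : IntegrableOn b (Ioc l u)) (hb0 : ∀ r, 0 ≤ b r)
    (hWb : ∀ p ∈ S, ∀ r ∈ Ioc (σ p) (κ p), ‖W p r‖ ≤ b r)
    (hWc : ∀ r, ∀ p ∈ S, σ p < r → r < κ p → ContinuousWithinAt (fun p => W p r) S p) :
    ContinuousOn (fun p => ∫ r in σ p..κ p, W p r) S := by
  have hrestrict : ∀ p ∈ S, (volume.restrict (Ioc l u)).restrict (Ioc (σ p) (κ p)) =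
      volume.restrict (Ioc (σ p) (κ p)) := fun p hp => by
    obtain ⟨hl, -, hu⟩ := hσκ p hp
    rw [Measure.restrict_restrict measurableSet_Ioc,
      inter_eq_self_of_subset_left (Ioc_subset_Ioc hl hu)]
  have hind : ∀ p ∈ S, ∫ r in σ p..κ p, W p r =
      ∫ r in Ioc l u, (Ioc (σ p) (κ p)).indicator (W p) r := fun p hp => by
    rw [intervalIntegral.integral_of_le (hσκ p hp).2.1,
      MeasureTheory.integral_indicator measurableSet_Ioc, hrestrict p hp]
  intro p₀ hp₀
  rw [ContinuousWithinAt, hind p₀ hp₀]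
  refine Tendsto.congr' (eventually_nhdsWithin_of_forall fun p hp => (hind p hp).symm) ?_
  refine tendsto_integral_filter_of_dominated_convergence b
    (eventually_nhdsWithin_of_forall fun p hp => ?_)
    (eventually_nhdsWithin_of_forall fun p hp => ae_of_all _ fun r => ?_) hb ?_
  · rw [aestronglyMeasurable_indicator_iff measurableSet_Ioc, hrestrict p hp]
    exact hWm p hp
  · by_cases hr : r ∈ Ioc (σ p) (κ p)
    · rw [indicator_of_mem hr]; exact hWb p hp r hr
    · rw [indicator_of_notMem hr, norm_zero]; exact hb0 r
  -- off the two moving endpoints, the indicator is eventually constant in `p` or equal to `W p r`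
  have hσ₀ : ∀ᵐ r ∂volume.restrict (Ioc l u), r ≠ σ p₀ :=
    ae_restrict_of_ae (by simp [ae_iff, measure_singleton])
  have hκ₀ : ∀ᵐ r ∂volume.restrict (Ioc l u), r ≠ κ p₀ :=
    ae_restrict_of_ae (by simp [ae_iff, measure_singleton])
  filter_upwards [hσ₀, hκ₀] with r hrσ hrκ
  rcases hrσ.lt_or_gt with hlt | hgt
  · rw [indicator_of_notMem fun h => hlt.not_gt h.1]
    refine tendsto_const_nhds.congr' ?_
    filter_upwards [hσ p₀ hp₀ (eventually_gt_nhds hlt)] with p hp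
    exact (indicator_of_notMem (fun h => hp.not_gt h.1) _).symm
  rcases hrκ.lt_or_gt with hlt' | hgt'
  · rw [indicator_of_mem (show r ∈ Ioc (σ p₀) (κ p₀) from ⟨hgt, hlt'.le⟩)]
    refine (hWc r p₀ hp₀ hgt hlt').congr' ?_
    filter_upwards [hσ p₀ hp₀ (eventually_lt_nhds hgt),
      hκ p₀ hp₀ (eventually_gt_nhds hlt')] with p hpσ hpκ
    exact (indicator_of_mem (show r ∈ Ioc (σ p) (κ p) from ⟨hpσ, hpκ.le⟩) _).symm
  · rw [indicator_of_notMem fun h => hgt'.not_ge h.2]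
    refine tendsto_const_nhds.congr' ?_
    filter_upwards [hκ p₀ hp₀ (eventually_lt_nhds hgt')] with p hp
    exact (indicator_of_notMem (fun h => hp.not_ge h.2) _).symm

theorem integral_integral_swap_triangle {f : ℝ → ℝ → E} {a b : ℝ} (hab : a ≤ b)
    (hf : Integrable (Function.uncurry f)
      ((volume.restrict (Ioc a b)).prod (volume.restrict (Ioc a b)))) :
    ∫ x in a..b, ∫ y in a..x, f x y = ∫ y in a..b, ∫ x in y..b, f x y := by
  have hswap := integral_integral_swap (f := fun x y => (Iic x).indicator (f x) y)
    (hf.indicator (measurableSet_le measurable_snd measurable_fst))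
  rw [intervalIntegral.integral_of_le hab, intervalIntegral.integral_of_le hab]
  convert hswap using 1
  · refine setIntegral_congr_fun measurableSet_Ioc fun x hx => ?_
    rw [intervalIntegral.integral_of_le hx.1.le,
      MeasureTheory.integral_indicator measurableSet_Iic,
      Measure.restrict_restrict measurableSet_Iic, inter_comm, Ioc_inter_Iic, min_eq_right hx.2]
  · refine setIntegral_congr_fun measurableSet_Ioc fun y hy => ?_
    have hIci : (fun x => (Iic x).indicator (f x) y) = (Ici y).indicator (fun x => f x y) := by
      ext x
      by_cases hyx : y ≤ x
      · rw [indicator_of_mem (show y ∈ Iic x from hyx),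
          indicator_of_mem (show x ∈ Ici y from hyx)]
      · rw [indicator_of_notMem (show y ∉ Iic x from hyx),
          indicator_of_notMem (show x ∉ Ici y from hyx)]
    have hIcc : Ici y ∩ Ioc a b = Icc y b := by
      ext x
      exact ⟨fun h => ⟨h.1, h.2.2⟩, fun h => ⟨h.1, hy.1.trans_le h.1, h.2⟩⟩
    rw [hIci, MeasureTheory.integral_indicator measurableSet_Ici,
      Measure.restrict_restrict measurableSet_Ici, hIcc, intervalIntegral.integral_of_le hy.2,
      integral_Icc_eq_integral_Ioc]

end ParametricIntegral

variable {X : Type*} [NormedAddCommGroup X] [NormedSpace ℝ X]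

/-- Standing hypotheses on the kernel `(t, r) ↦ U (t - r) ∘L G r` of the Volterra equation. -/
structure IsVolterraKernel (U G : ℝ → X →L[ℝ] X) (T M : ℝ) : Prop where
  nonneg : 0 ≤ T
  norm_le : ∀ t ∈ Icc 0 T, ‖U t‖ ≤ M
  continuousOn : ∀ x, ContinuousOn (fun t => U t x) (Ici 0)
  aestronglyMeasurable : ∀ x, AEStronglyMeasurable (fun t => G t x) (volume.restrict (Ioc 0 T))
  integrableOn : IntegrableOn (fun t => ‖G t‖) (Ioc 0 T)

namespace IsVolterraKernel

variable {U G : ℝ → X →L[ℝ] X} {T M a b t : ℝ} {w : ℝ → X}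

theorem M_nonneg (hK : IsVolterraKernel U G T M) : 0 ≤ M :=
  (norm_nonneg _).trans (hK.norm_le 0 ⟨le_rfl, hK.nonneg⟩)

theorem intervalIntegrable_norm (hK : IsVolterraKernel U G T M) (ha : 0 ≤ a) (hab : a ≤ b)
    (hb : b ≤ T) : IntervalIntegrable (fun r => ‖G r‖) volume a b :=
  (intervalIntegrable_iff_integrableOn_Ioc_of_le hab).2 <|
    hK.integrableOn.mono_set (Ioc_subset_Ioc ha hb)

theorem continuousOn_U_sub (hK : IsVolterraKernel U G T M) (x : X) :
    ContinuousOn (fun r => U (t - r) x) (Iic t) :=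
  (hK.continuousOn x).comp (continuousOn_const.sub continuousOn_id)
    fun _ hr => mem_Ici.2 (sub_nonneg.2 hr)

theorem norm_U_sub_le (hK : IsVolterraKernel U G T M) {r : ℝ} (hr : 0 ≤ r) (hrt : r ≤ t)
    (ht : t ≤ T) : ‖U (t - r)‖ ≤ M :=
  hK.norm_le _ ⟨sub_nonneg.2 hrt, by linarith⟩

theorem intervalIntegrable_G_apply (hK : IsVolterraKernel U G T M) (ha : 0 ≤ a) (hab : a ≤ b)
    (hb : b ≤ T) (hw : ContinuousOn w (Icc a b)) :
    IntervalIntegrable (fun r => G r (w r)) volume a b := by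
  rw [intervalIntegrable_iff_integrableOn_Ioc_of_le hab]
  obtain ⟨B, hB⟩ := isCompact_Icc.exists_bound_of_continuousOn hw
  refine ((hK.intervalIntegrable_norm ha hab hb).1.mul_const B).mono' ?_ ?_
  · exact ((hw.mono Ioc_subset_Icc_self).aestronglyMeasurable measurableSet_Ioc).clm_apply_of_forall
      fun x => (hK.aestronglyMeasurable x).mono_measure
        (Measure.restrict_mono (Ioc_subset_Ioc ha hb) le_rfl)
  · filter_upwards [ae_restrict_mem measurableSet_Ioc] with r hr
    exact (G r).le_opNorm _ |>.trans
      (mul_le_mul_of_nonneg_left (hB r (Ioc_subset_Icc_self hr)) (norm_nonneg _))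

theorem intervalIntegrable_U_G (hK : IsVolterraKernel U G T M) (ha : 0 ≤ a) (hab : a ≤ b)
    (hbt : b ≤ t) (ht : t ≤ T) (hw : ContinuousOn w (Icc a b)) :
    IntervalIntegrable (fun r => U (t - r) (G r (w r))) volume a b := by
  rw [intervalIntegrable_iff_integrableOn_Ioc_of_le hab]
  refine ((intervalIntegrable_iff_integrableOn_Ioc_of_le hab).1
    (hK.intervalIntegrable_G_apply ha hab (hbt.trans ht) hw)).clm_apply_of_forall (C := M)
    (fun x => ((hK.continuousOn_U_sub x).mono fun _ hr => hr.2.trans hbt).aestronglyMeasurable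
      measurableSet_Ioc) ?_
  filter_upwards [ae_restrict_mem measurableSet_Ioc] with r hr
  exact hK.norm_U_sub_le (ha.trans hr.1.le) (hr.2.trans hbt) ht

theorem norm_integral_U_G_le (hK : IsVolterraKernel U G T M) (ha : 0 ≤ a) (hat : a ≤ t)
    (ht : t ≤ T) (hw : ContinuousOn w (Icc a t)) :
    ‖∫ r in a..t, U (t - r) (G r (w r))‖ ≤ M * ∫ r in a..t, ‖G r‖ * ‖w r‖ := by
  rw [← intervalIntegral.integral_const_mul]
  refine intervalIntegral.norm_integral_le_of_norm_le hat (ae_of_all _ fun r hr => ?_)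
    (((hK.intervalIntegrable_norm ha hat ht).mul_continuousOn
      (by rw [uIcc_of_le hat]; exact hw.norm)).const_mul M)
  calc ‖U (t - r) (G r (w r))‖ ≤ M * ‖G r (w r)‖ :=
        (U _).le_of_opNorm_le (hK.norm_U_sub_le (ha.trans hr.1.le) hr.2 ht) _
    _ ≤ M * (‖G r‖ * ‖w r‖) := mul_le_mul_of_nonneg_left ((G r).le_opNorm _) hK.M_nonneg

theorem eqOn_of_volterra (hK : IsVolterraKernel U G T M) {f v : ℝ → X} (ha : 0 ≤ a)
    (hb : b ≤ T) (hv : ContinuousOn v (Icc a b)) (hw : ContinuousOn w (Icc a b))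
    (hveq : ∀ t ∈ Icc a b, v t = f t + ∫ r in a..t, U (t - r) (G r (v r)))
    (hweq : ∀ t ∈ Icc a b, w t = f t + ∫ r in a..t, U (t - r) (G r (w r))) :
    EqOn v w (Icc a b) := by
  intro t ht
  have hle : ∀ t ∈ Icc a b, ‖v t - w t‖ ≤ M * ∫ r in a..t, ‖G r‖ * ‖v r - w r‖ := by
    intro t ht
    have hsub : Icc a t ⊆ Icc a b := Icc_subset_Icc_right ht.2
    rw [hveq t ht, hweq t ht, add_sub_add_left_eq_sub,
      ← intervalIntegral.integral_sub
        (hK.intervalIntegrable_U_G ha ht.1 le_rfl (ht.2.trans hb) (hv.mono hsub))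
        (hK.intervalIntegrable_U_G ha ht.1 le_rfl (ht.2.trans hb) (hw.mono hsub))]
    simp only [← map_sub]
    exact hK.norm_integral_U_G_le ha ht.1 (ht.2.trans hb) ((hv.sub hw).mono hsub)
  have := nonpos_of_le_const_mul_integral (hK.intervalIntegrable_norm ha (ht.1.trans ht.2) hb)
    (fun r _ => norm_nonneg _) hK.M_nonneg (hv.sub hw).norm hle t ht
  exact sub_eq_zero.1 (norm_le_zero_iff.1 this)

end IsVolterraKernel

def triangle (T : ℝ) : Set (ℝ × ℝ) := {p | 0 ≤ p.2 ∧ p.2 ≤ p.1 ∧ p.1 ≤ T}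

namespace triangle

variable {T : ℝ}

instance : CompactSpace (triangle T) := isCompact_iff_compactSpace.mp <|
  isCompact_Icc.of_isClosed_subset
    ((isClosed_le continuous_const continuous_snd).inter
      ((isClosed_le continuous_snd continuous_fst).inter
        (isClosed_le continuous_fst continuous_const)))
    (fun p hp => (⟨⟨hp.1.trans hp.2.1, hp.1⟩, ⟨hp.2.2, hp.2.1.trans hp.2.2⟩⟩ :
      p ∈ Icc ((0 : ℝ), (0 : ℝ)) (T, T)))

/-- A continuous retraction of the plane onto `triangle T`. -/
def proj (hT : 0 ≤ T) (p : ℝ × ℝ) : triangle T :=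
  ⟨(max (max 0 (min p.2 T)) (min p.1 T), max 0 (min p.2 T)),
    le_max_left _ _, le_max_left _ _, max_le (max_le hT (min_le_right _ _)) (min_le_right _ _)⟩

theorem continuous_proj (hT : 0 ≤ T) : Continuous (proj hT) :=
  Continuous.subtype_mk (by fun_prop) _

theorem proj_of_mem (hT : 0 ≤ T) {p : ℝ × ℝ} (hp : p ∈ triangle T) : proj hT p = ⟨p, hp⟩ := by
  obtain ⟨h0, hst, hT'⟩ := hp
  have hs : max 0 (min p.2 T) = p.2 := by rw [min_eq_left (hst.trans hT'), max_eq_right h0]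
  ext <;> simp only [proj, hs, min_eq_left hT', max_eq_right hst]

end triangle

namespace IsVolterraKernel

variable {U G : ℝ → X →L[ℝ] X} {T M : ℝ}

noncomputable def freeEvolution (hK : IsVolterraKernel U G T M) : X →L[ℝ] C(triangle T, X) :=
  LinearMap.mkContinuous
    { toFun := fun y => ⟨fun q => U (q.1.1 - q.1.2) y,
        (hK.continuousOn y).comp_continuous (by fun_prop) fun q => sub_nonneg.2 q.2.2.1⟩
      map_add' := fun y z => by ext; simp
      map_smul' := fun c y => by ext; simp }
    M fun y => (ContinuousMap.norm_le _ (mul_nonneg hK.M_nonneg (norm_nonneg y))).2 fun q =>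
      (U _).le_of_opNorm_le (hK.norm_U_sub_le q.2.1 q.2.2.1 q.2.2.2) y

theorem continuous_apply_proj (hK : IsVolterraKernel U G T M) (u : C(triangle T, X)) (s : ℝ) :
    Continuous fun r => u (triangle.proj hK.nonneg (r, s)) :=
  u.continuous.comp ((triangle.continuous_proj hK.nonneg).comp (by fun_prop))

theorem intervalIntegrable_volterra (hK : IsVolterraKernel U G T M) (u : C(triangle T, X))
    (q : triangle T) : IntervalIntegrable
      (fun r => U (q.1.1 - r) (G r (u (triangle.proj hK.nonneg (r, q.1.2))))) volume q.1.2 q.1.1 :=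
  hK.intervalIntegrable_U_G q.2.1 q.2.2.1 le_rfl q.2.2.2 (hK.continuous_apply_proj u _).continuousOn

theorem norm_integral_volterra_le (hK : IsVolterraKernel U G T M) (u : C(triangle T, X))
    (q : triangle T) :
    ‖∫ r in q.1.2..q.1.1, U (q.1.1 - r) (G r (u (triangle.proj hK.nonneg (r, q.1.2))))‖ ≤
      M * ∫ r in q.1.2..q.1.1, ‖G r‖ * ‖u (triangle.proj hK.nonneg (r, q.1.2))‖ :=
  hK.norm_integral_U_G_le q.2.1 q.2.2.1 q.2.2.2 (hK.continuous_apply_proj u _).continuousOn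

theorem continuous_integral_volterra (hK : IsVolterraKernel U G T M) (u : C(triangle T, X)) :
    Continuous fun q : triangle T =>
      ∫ r in q.1.2..q.1.1, U (q.1.1 - r) (G r (u (triangle.proj hK.nonneg (r, q.1.2)))) := by
  have hM := hK.M_nonneg
  rw [← continuousOn_univ]
  refine continuousOn_intervalIntegral_of_dominated (l := 0) (u := T)
    (b := fun r => M * ‖u‖ * ‖G r‖) (by fun_prop) (by fun_prop)
    (fun q _ => ⟨q.2.1, q.2.2.1, q.2.2.2⟩)
    (fun q _ => (hK.intervalIntegrable_volterra u q).1.aestronglyMeasurable)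
    (hK.integrableOn.const_mul _) (fun r => by positivity) (fun q _ r hr => ?_)
    (fun r q₀ _ hr₀ hr₁ => ?_)
  · calc ‖U (q.1.1 - r) (G r (u (triangle.proj hK.nonneg (r, q.1.2))))‖
        ≤ M * (‖G r‖ * ‖u (triangle.proj hK.nonneg (r, q.1.2))‖) :=
          (U _).le_of_opNorm_le (hK.norm_U_sub_le (q.2.1.trans hr.1.le) hr.2 q.2.2.2) _ |>.trans
            (mul_le_mul_of_nonneg_left ((G r).le_opNorm _) hM)
      _ ≤ M * (‖G r‖ * ‖u‖) := by gcongr; exact u.norm_coe_le_norm _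
      _ = M * ‖u‖ * ‖G r‖ := by ring
  · rw [continuousWithinAt_univ]
    have hfst : Continuous fun q : triangle T => q.1.1 := by fun_prop
    have hev : ∀ᶠ q in 𝓝 q₀, r < q.1.1 := (hfst.tendsto q₀).eventually (eventually_gt_nhds hr₁)
    have hτ : Tendsto (fun q : triangle T => q.1.1 - r) (𝓝 q₀) (𝓝[Ici 0] (q₀.1.1 - r)) :=
      tendsto_nhdsWithin_iff.2 ⟨(hfst.sub continuous_const).tendsto q₀,
        hev.mono fun q hq => mem_Ici.2 (sub_nonneg.2 hq.le)⟩
    refine Tendsto.clm_apply_of_eventually_norm_le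
      ((hK.continuousOn _ _ (mem_Ici.2 (sub_nonneg.2 hr₁.le))).tendsto.comp hτ)
      (hev.mono fun q hq => hK.norm_U_sub_le (q₀.2.1.trans hr₀.le) hq.le q.2.2.2) ?_
    exact ((G r).continuous.comp (u.continuous.comp
      ((triangle.continuous_proj hK.nonneg).comp (by fun_prop)))).tendsto q₀

theorem integral_norm_le (hK : IsVolterraKernel U G T M) {s t : ℝ} (hs : 0 ≤ s) (hst : s ≤ t)
    (ht : t ≤ T) : ∫ r in s..t, ‖G r‖ ≤ ∫ r in 0..T, ‖G r‖ :=
  intervalIntegral.integral_mono_interval hs hst ht (ae_of_all _ fun _ => norm_nonneg _)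
    (hK.intervalIntegrable_norm le_rfl hK.nonneg le_rfl)

noncomputable def volterraOp (hK : IsVolterraKernel U G T M) :
    C(triangle T, X) →L[ℝ] C(triangle T, X) :=
  LinearMap.mkContinuous
    { toFun := fun u => ⟨fun q =>
          ∫ r in q.1.2..q.1.1, U (q.1.1 - r) (G r (u (triangle.proj hK.nonneg (r, q.1.2)))),
        hK.continuous_integral_volterra u⟩
      map_add' := fun u v => by
        ext q
        simp only [ContinuousMap.add_apply, map_add, ContinuousMap.coe_mk]
        exact intervalIntegral.integral_add (hK.intervalIntegrable_volterra u q)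
          (hK.intervalIntegrable_volterra v q)
      map_smul' := fun c u => by
        ext q
        simp only [ContinuousMap.smul_apply, map_smul, ContinuousMap.coe_mk, RingHom.id_apply]
        exact intervalIntegral.integral_smul c _ }
    (M * ∫ r in 0..T, ‖G r‖) fun u => by
      have hM := hK.M_nonneg
      have hK0 : 0 ≤ ∫ r in 0..T, ‖G r‖ :=
        intervalIntegral.integral_nonneg hK.nonneg fun _ _ => norm_nonneg _
      have hGu := (hK.intervalIntegrable_norm le_rfl hK.nonneg le_rfl).mul_const ‖u‖
      refine (ContinuousMap.norm_le _ (by positivity)).2 fun q => ?_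
      calc _ ≤ M * ∫ r in q.1.2..q.1.1, ‖G r‖ * ‖u (triangle.proj hK.nonneg (r, q.1.2))‖ :=
            hK.norm_integral_volterra_le u q
        _ ≤ M * ∫ r in q.1.2..q.1.1, ‖G r‖ * ‖u‖ := by
            have hGq := hK.intervalIntegrable_norm q.2.1 q.2.2.1 q.2.2.2
            gcongr
            exact intervalIntegral.integral_mono_on q.2.2.1
              (hGq.mul_continuousOn (hK.continuous_apply_proj u _).norm.continuousOn)
              (hGq.mul_const _) fun r _ => by gcongr; exact u.norm_coe_le_norm _
        _ ≤ M * (∫ r in 0..T, ‖G r‖) * ‖u‖ := by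
            rw [intervalIntegral.integral_mul_const, mul_assoc]
            gcongr
            exact hK.integral_norm_le q.2.1 q.2.2.1 q.2.2.2

theorem volterraOp_apply (hK : IsVolterraKernel U G T M) (u : C(triangle T, X))
    (q : triangle T) : hK.volterraOp u q =
      ∫ r in q.1.2..q.1.1, U (q.1.1 - r) (G r (u (triangle.proj hK.nonneg (r, q.1.2)))) :=
  rfl

theorem norm_volterraOp_pow_le (hK : IsVolterraKernel U G T M) (n : ℕ) :
    ‖hK.volterraOp ^ n‖ ≤ (M * ∫ r in 0..T, ‖G r‖) ^ n / n ! := by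
  have hM := hK.M_nonneg
  have hK0 : 0 ≤ ∫ r in 0..T, ‖G r‖ :=
    intervalIntegral.integral_nonneg hK.nonneg fun _ _ => norm_nonneg _
  refine ContinuousLinearMap.opNorm_le_bound _ (by positivity) fun u => ?_
  refine (ContinuousMap.norm_le _ (by positivity)).2 fun q => ?_
  obtain ⟨⟨t, s⟩, hs, hst, ht⟩ := q
  -- the Grönwall iteration in the first variable, for fixed `s`
  have key := le_mul_pow_div_factorial_of_le_integral (k := fun r => ‖G r‖)
    (f := fun n t' => ‖(hK.volterraOp ^ n) u (triangle.proj hK.nonneg (t', s))‖) (B := ‖u‖)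
    (hK.intervalIntegrable_norm hs (hst.trans ht) le_rfl) (fun _ _ => norm_nonneg _) hM
    (fun n => (hK.continuous_apply_proj _ s).norm.continuousOn)
    (fun t' _ => by simpa using u.norm_coe_le_norm _) (fun n t' ht' => ?_) n t ⟨hst, ht⟩
  · have hst' : 0 ≤ ∫ r in s..t, ‖G r‖ :=
      intervalIntegral.integral_nonneg hst fun _ _ => norm_nonneg _
    rw [triangle.proj_of_mem hK.nonneg ⟨hs, hst, ht⟩] at key
    calc _ ≤ ‖u‖ * (M * ∫ r in s..t, ‖G r‖) ^ n / n ! := key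
      _ ≤ ‖u‖ * (M * ∫ r in 0..T, ‖G r‖) ^ n / n ! := by
        gcongr; exact hK.integral_norm_le hs hst ht
      _ = _ := by ring
  · simp only
    rw [pow_succ', mul_apply_eq_comp,
      triangle.proj_of_mem hK.nonneg (p := (t', s)) ⟨hs, ht'.1, ht'.2⟩]
    exact hK.norm_integral_volterra_le _ ⟨(t', s), hs, ht'.1, ht'.2⟩

end IsVolterraKernel

namespace IsVolterraKernel

variable {U G : ℝ → X →L[ℝ] X} {T M : ℝ}

noncomputable def resolvent (hK : IsVolterraKernel U G T M) :
    C(triangle T, X) →L[ℝ] C(triangle T, X) :=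
  ∑' n, hK.volterraOp ^ n

/-- Off `triangle T`, this is the value at `triangle.proj hK.nonneg (t, s)`. -/
noncomputable def evolution (hK : IsVolterraKernel U G T M) (t s : ℝ) : X →L[ℝ] X :=
  ContinuousMap.evalCLM ℝ (triangle.proj hK.nonneg (t, s)) ∘L hK.resolvent ∘L hK.freeEvolution

theorem continuous_evolution_apply (hK : IsVolterraKernel U G T M) (y : X) :
    Continuous fun p : ℝ × ℝ => hK.evolution p.1 p.2 y :=
  (hK.resolvent (hK.freeEvolution y)).continuous.comp (triangle.continuous_proj hK.nonneg)

theorem continuous_evolution_apply_left (hK : IsVolterraKernel U G T M) (s : ℝ) (y : X) :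
    Continuous fun t => hK.evolution t s y :=
  (hK.continuous_evolution_apply y).comp (continuous_id.prodMk continuous_const)

theorem continuous_evolution_apply_right (hK : IsVolterraKernel U G T M) (t : ℝ) (y : X) :
    Continuous fun s => hK.evolution t s y :=
  (hK.continuous_evolution_apply y).comp (continuous_const.prodMk continuous_id)

theorem norm_evolution_le (hK : IsVolterraKernel U G T M) (t s : ℝ) :
    ‖hK.evolution t s‖ ≤ ‖hK.resolvent‖ * ‖hK.freeEvolution‖ :=
  ContinuousLinearMap.opNorm_le_bound _ (by positivity) fun y =>
    calc ‖hK.evolution t s y‖ ≤ ‖hK.resolvent (hK.freeEvolution y)‖ :=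
          ContinuousMap.norm_coe_le_norm _ _
      _ ≤ ‖hK.resolvent‖ * ‖hK.freeEvolution‖ * ‖y‖ :=
          (hK.resolvent.comp hK.freeEvolution).le_of_opNorm_le
            (ContinuousLinearMap.opNorm_comp_le _ _) y

theorem intervalIntegrable_evolution_apply (hK : IsVolterraKernel U G T M) {a b : ℝ} (t : ℝ)
    {x : ℝ → X} (hx : IntervalIntegrable x volume a b) :
    IntervalIntegrable (fun σ => hK.evolution t σ (x σ)) volume a b :=
  ⟨hx.1.clm_apply_of_forall
      (fun z => (hK.continuous_evolution_apply_right t z).aestronglyMeasurable)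
      (ae_of_all _ fun _ => hK.norm_evolution_le _ _),
    hx.2.clm_apply_of_forall
      (fun z => (hK.continuous_evolution_apply_right t z).aestronglyMeasurable)
      (ae_of_all _ fun _ => hK.norm_evolution_le _ _)⟩

theorem continuousOn_integral_evolution (hK : IsVolterraKernel U G T M) {s : ℝ} {x : ℝ → X}
    (hx : IntegrableOn x (Ioc s T)) :
    ContinuousOn (fun t => ∫ r in s..t, hK.evolution t r (x r)) (Icc s T) :=
  continuousOn_intervalIntegral_of_dominated (σ := fun _ => s) (κ := id)
    (b := fun r => ‖hK.resolvent‖ * ‖hK.freeEvolution‖ * ‖x r‖)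
    continuousOn_const continuousOn_id (fun t ht => ⟨le_rfl, ht.1, ht.2⟩)
    (fun t ht => ((hx.mono_set (Ioc_subset_Ioc_right ht.2)).1.clm_apply_of_forall
      fun z => (hK.continuous_evolution_apply_right t z).aestronglyMeasurable))
    (hx.norm.const_mul _) (fun _ => by positivity)
    (fun t _ r _ => (hK.evolution t r).le_of_opNorm_le (hK.norm_evolution_le t r) _)
    (fun r t _ _ _ => (hK.continuous_evolution_apply_left r (x r)).continuousWithinAt)

theorem integrable_prod_volterra_evolution (hK : IsVolterraKernel U G T M) {s t : ℝ}
    (hs : 0 ≤ s) (ht : t ≤ T) {x : ℝ → X} (hx : IntegrableOn x (Ioc s t)) :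
    Integrable (Function.uncurry fun ρ σ => U (t - ρ) (G ρ (hK.evolution ρ σ (x σ))))
      ((volume.restrict (Ioc s t)).prod (volume.restrict (Ioc s t))) := by
  set μ := volume.restrict (Ioc s t)
  set C := ‖hK.resolvent‖ * ‖hK.freeEvolution‖
  have hM := hK.M_nonneg
  have hUμ : ∀ z, AEStronglyMeasurable (fun ρ => U (t - ρ) z) μ := fun z =>
    ((hK.continuousOn_U_sub z).mono fun _ hρ => hρ.2).aestronglyMeasurable measurableSet_Ioc
  have hGμ : ∀ z, AEStronglyMeasurable (fun ρ => G ρ z) μ := fun z =>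
    (hK.aestronglyMeasurable z).mono_measure (Measure.restrict_mono (Ioc_subset_Ioc hs ht) le_rfl)
  have hTμ : ∀ z, AEStronglyMeasurable (fun q : ℝ × ℝ => hK.evolution q.1 q.2 z) (μ.prod μ) :=
    fun z => (hK.continuous_evolution_apply z).aestronglyMeasurable
  have hGint : Integrable (fun ρ => ‖G ρ‖) μ := hK.integrableOn.mono_set (Ioc_subset_Ioc hs ht)
  refine ((hGint.mul_prod hx.norm).const_mul (M * C)).mono'
    (((hx.1.comp_snd.clm_apply_of_forall hTμ).clm_apply_of_forall fun z =>
      (hGμ z).comp_fst).clm_apply_of_forall fun z => (hUμ z).comp_fst) ?_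
  rw [Measure.prod_restrict]
  filter_upwards [ae_restrict_mem (measurableSet_Ioc.prod measurableSet_Ioc)] with q hq
  calc ‖U (t - q.1) (G q.1 (hK.evolution q.1 q.2 (x q.2)))‖
      ≤ M * (‖G q.1‖ * ‖hK.evolution q.1 q.2 (x q.2)‖) :=
        (U _).le_of_opNorm_le (hK.norm_U_sub_le (hs.trans hq.1.1.le) hq.1.2 ht) _ |>.trans
          (mul_le_mul_of_nonneg_left ((G _).le_opNorm _) hM)
    _ ≤ M * (‖G q.1‖ * (C * ‖x q.2‖)) := by
        gcongr; exact (hK.evolution _ _).le_of_opNorm_le (hK.norm_evolution_le _ _) _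
    _ = _ := by ring

end IsVolterraKernel

namespace IsVolterraKernel

variable [CompleteSpace X] {U G : ℝ → X →L[ℝ] X} {T M : ℝ}

theorem summable_volterraOp_pow (hK : IsVolterraKernel U G T M) :
    Summable fun n => hK.volterraOp ^ n :=
  .of_norm_bounded (Real.summable_pow_div_factorial _) hK.norm_volterraOp_pow_le

theorem resolvent_eq_one_add (hK : IsVolterraKernel U G T M) :
    hK.resolvent = 1 + hK.volterraOp * hK.resolvent := by
  conv_lhs => rw [resolvent, hK.summable_volterraOp_pow.tsum_eq_zero_add]
  simp only [pow_zero, pow_succ', hK.summable_volterraOp_pow.tsum_mul_left, resolvent]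

theorem evolution_eq_add_integral (hK : IsVolterraKernel U G T M) {s t : ℝ} (hs : 0 ≤ s)
    (hst : s ≤ t) (ht : t ≤ T) (y : X) :
    hK.evolution t s y = U (t - s) y + ∫ r in s..t, U (t - r) (G r (hK.evolution r s y)) := by
  have h := congrArg (fun R => R (hK.freeEvolution y) ⟨(t, s), hs, hst, ht⟩)
    hK.resolvent_eq_one_add
  simp only [add_apply, one_apply_eq_self, mul_apply_eq_comp, ContinuousMap.add_apply,
    volterraOp_apply] at h
  rw [evolution, ContinuousLinearMap.comp_apply, ContinuousLinearMap.comp_apply,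
    ContinuousMap.evalCLM_apply, triangle.proj_of_mem hK.nonneg ⟨hs, hst, ht⟩, h]
  rfl

theorem evolution_comp_apply (hK : IsVolterraKernel U G T M)
    (hU : ∀ s ≥ (0 : ℝ), ∀ t ≥ (0 : ℝ), U (t + s) = U t ∘L U s) {s r t : ℝ} (hs : 0 ≤ s)
    (hsr : s ≤ r) (hrt : r ≤ t) (ht : t ≤ T) (y : X) :
    hK.evolution t r (hK.evolution r s y) = hK.evolution t s y := by
  have hr : 0 ≤ r := hs.trans hsr
  refine hK.eqOn_of_volterra (f := fun t' => U (t' - r) (hK.evolution r s y)) hr le_rfl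
    (hK.continuous_evolution_apply_left _ _).continuousOn
    (hK.continuous_evolution_apply_left _ _).continuousOn
    (fun t' ht' => hK.evolution_eq_add_integral hr ht'.1 ht'.2 _) (fun t' ht' => ?_) ⟨hrt, ht⟩
  have hUU : ∀ ρ ≤ r, ∀ z, U (t' - r) (U (r - ρ) z) = U (t' - ρ) z := fun ρ hρ z => by
    rw [← ContinuousLinearMap.comp_apply, ← hU _ (sub_nonneg.2 hρ) _ (sub_nonneg.2 ht'.1)]
    ring_nf
  have hint : ∀ a b, 0 ≤ a → a ≤ b → b ≤ t' → IntervalIntegrable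
      (fun ρ => U (t' - ρ) (G ρ (hK.evolution ρ s y))) volume a b := fun a b ha hab hb =>
    hK.intervalIntegrable_U_G ha hab hb ht'.2 (hK.continuous_evolution_apply_left _ _).continuousOn
  rw [hK.evolution_eq_add_integral hs (hsr.trans ht'.1) ht'.2,
    ← intervalIntegral.integral_add_adjacent_intervals (hint s r hs hsr ht'.1)
      (hint r t' hr ht'.1 le_rfl),
    hK.evolution_eq_add_integral hs hsr (ht'.1.trans ht'.2), map_add,
    ← (U (t' - r)).intervalIntegral_comp_comm (hK.intervalIntegrable_U_G hs hsr le_rfl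
      (ht'.1.trans ht'.2) (hK.continuous_evolution_apply_left _ _).continuousOn), hUU s hsr,
    intervalIntegral.integral_congr fun ρ hρ =>
      hUU ρ (by rw [uIcc_of_le hsr] at hρ; exact hρ.2) _]
  abel

/-- Fubini on the triangle `s ≤ σ ≤ ρ ≤ t`, followed by the forward equation in `ρ`. -/
theorem integral_volterra_integral_evolution (hK : IsVolterraKernel U G T M) {s t : ℝ}
    (hs : 0 ≤ s) (hst : s ≤ t) (ht : t ≤ T) {x : ℝ → X} (hx : IntervalIntegrable x volume s t) :
    ∫ ρ in s..t, U (t - ρ) (G ρ (∫ σ in s..ρ, hK.evolution ρ σ (x σ))) =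
      ∫ σ in s..t, (hK.evolution t σ (x σ) - U (t - σ) (x σ)) := by
  calc ∫ ρ in s..t, U (t - ρ) (G ρ (∫ σ in s..ρ, hK.evolution ρ σ (x σ)))
      = ∫ ρ in s..t, ∫ σ in s..ρ, U (t - ρ) (G ρ (hK.evolution ρ σ (x σ))) :=
        intervalIntegral.integral_congr fun ρ hρ =>
          (((U (t - ρ)).comp (G ρ)).intervalIntegral_comp_comm
            (hK.intervalIntegrable_evolution_apply ρ
              (hx.mono_set (uIcc_subset_uIcc_left hρ)))).symm
    _ = ∫ σ in s..t, ∫ ρ in σ..t, U (t - ρ) (G ρ (hK.evolution ρ σ (x σ))) :=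
        integral_integral_swap_triangle hst (hK.integrable_prod_volterra_evolution hs ht
          ((intervalIntegrable_iff_integrableOn_Ioc_of_le hst).1 hx))
    _ = ∫ σ in s..t, (hK.evolution t σ (x σ) - U (t - σ) (x σ)) := by
        refine intervalIntegral.integral_congr fun σ hσ => ?_
        rw [uIcc_of_le hst] at hσ
        rw [hK.evolution_eq_add_integral (hs.trans hσ.1) hσ.2 ht (x σ)]
        abel

theorem evolution_eq_add_integral_evolution (hK : IsVolterraKernel U G T M) {s t : ℝ}
    (hs : 0 ≤ s) (hst : s ≤ t) (ht : t ≤ T) (y : X) :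
    hK.evolution t s y = U (t - s) y + ∫ r in s..t, hK.evolution t r (G r (U (r - s) y)) := by
  set x : ℝ → X := fun ρ => G ρ (U (ρ - s) y)
  set I : ℝ → X := fun τ => ∫ ρ in s..τ, hK.evolution τ ρ (x ρ)
  have hUs : ContinuousOn (fun ρ => U (ρ - s) y) (Icc s T) :=
    (hK.continuousOn y).comp (continuousOn_id.sub continuousOn_const)
      fun ρ hρ => mem_Ici.2 (sub_nonneg.2 hρ.1)
  have hx : ∀ τ ∈ Icc s T, IntervalIntegrable x volume s τ := fun τ hτ =>
    hK.intervalIntegrable_G_apply hs hτ.1 hτ.2 (hUs.mono (Icc_subset_Icc_right hτ.2))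
  have hsT : s ≤ T := hst.trans ht
  have hIc : ContinuousOn I (Icc s T) := hK.continuousOn_integral_evolution
    ((intervalIntegrable_iff_integrableOn_Ioc_of_le hsT).1 (hx T ⟨hsT, le_rfl⟩))
  have hIeq : ∀ τ ∈ Icc s T, I τ = ∫ ρ in s..τ, U (τ - ρ) (G ρ (U (ρ - s) y + I ρ)) := by
    intro τ hτ
    have hsub : Icc s τ ⊆ Icc s T := Icc_subset_Icc_right hτ.2
    simp only [map_add]
    rw [intervalIntegral.integral_add
        (hK.intervalIntegrable_U_G hs hτ.1 le_rfl hτ.2 (hUs.mono hsub))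
        (hK.intervalIntegrable_U_G hs hτ.1 le_rfl hτ.2 (hIc.mono hsub)),
      hK.integral_volterra_integral_evolution hs hτ.1 hτ.2 (hx τ hτ),
      intervalIntegral.integral_sub (hK.intervalIntegrable_evolution_apply τ (hx τ hτ))
        (hK.intervalIntegrable_U_G hs hτ.1 le_rfl hτ.2 (hUs.mono hsub))]
    abel
  exact hK.eqOn_of_volterra (w := fun τ => U (τ - s) y + I τ) hs le_rfl
    (hK.continuous_evolution_apply_left s y).continuousOn (hUs.add hIc)
    (fun τ hτ => hK.evolution_eq_add_integral hs hτ.1 hτ.2 y)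
    (fun τ hτ => congrArg _ (hIeq τ hτ)) ⟨hst, ht⟩

end IsVolterraKernel

end

theorem exists_unique_evolution_operator_general
    {X : Type*} [NormedAddCommGroup X] [InnerProductSpace ℝ X] [CompleteSpace X]
    (𝔘 : ℝ → (X →L[ℝ] X))
    (h𝔘0 : 𝔘 0 = 1)
    (h𝔘add : ∀ s ≥ (0 : ℝ), ∀ t ≥ (0 : ℝ), 𝔘 (t + s) = 𝔘 t ∘L 𝔘 s)
    (h𝔘cont : ∀ x : X, ContinuousOn (fun t => 𝔘 t x) (Set.Ici 0))
    (T : ℝ) (hT : 0 < T)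
    (G : ℝ → (X →L[ℝ] X)) (hG : IsL2OperatorValued T G) :
    ∃ 𝔗 : ℝ → ℝ → (X →L[ℝ] X), IsEvolutionOperator 𝔘 T G 𝔗 ∧
      ∀ 𝔗' : ℝ → ℝ → (X →L[ℝ] X), IsEvolutionOperator 𝔘 T G 𝔗' →
        ∀ s t : ℝ, 0 ≤ s → s ≤ t → t ≤ T → 𝔗' t s = 𝔗 t s := by
  obtain ⟨M, hM⟩ : ∃ M, ∀ t ∈ Set.Icc 0 T, ‖𝔘 t‖ ≤ M := by
    obtain ⟨M, hM⟩ := banach_steinhaus (g := fun t : Set.Icc 0 T => 𝔘 t) fun x =>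
      (isCompact_Icc.exists_bound_of_continuousOn ((h𝔘cont x).mono Set.Icc_subset_Ici_self)).imp
        fun C hC t => hC t t.2
    exact ⟨M, fun t ht => hM ⟨t, ht⟩⟩
  have hK : IsVolterraKernel 𝔘 G T M := ⟨hT.le, hM, h𝔘cont, hG.1, hG.2.integrable one_le_two⟩
  refine ⟨hK.evolution, ⟨fun y => (hK.continuous_evolution_apply y).continuousOn,
    fun t ht => ?_, fun s r t hs hsr hrt ht => ContinuousLinearMap.ext fun y =>
      hK.evolution_comp_apply h𝔘add hs hsr hrt ht y,
    fun s t hs hst ht y => hK.evolution_eq_add_integral hs hst ht y,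
    fun s t hs hst ht y => hK.evolution_eq_add_integral_evolution hs hst ht y⟩, ?_⟩
  · ext y
    simpa [h𝔘0] using hK.evolution_eq_add_integral ht.1 le_rfl ht.2 y
  · rintro 𝔗' ⟨hcont', -, -, hfwd', -⟩ s t hs hst ht
    ext y
    exact hK.eqOn_of_volterra hs le_rfl
      ((hcont' y).comp (continuous_id.prodMk continuous_const).continuousOn
        fun τ hτ => ⟨hs, hτ.1, hτ.2⟩)
      (hK.continuous_evolution_apply_left s y).continuousOn
      (fun τ hτ => hfwd' s τ hs hτ.1 hτ.2 y)
      (fun τ hτ => hK.evolution_eq_add_integral hs hτ.1 hτ.2 y) ⟨hst, ht⟩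

/-- For any `G ∈ L²([0,T]; L(X))` there exists a unique strongly continuous
evolution operator `𝔗 : Δ → L(X)` with `𝔗(t,t) = I`, `𝔗(t,r)𝔗(r,s) = 𝔗(t,s)` and
`𝔗(t,s;G)y = 𝔘(t−s)y + ∫ₛᵗ 𝔘(t−r)G(r)𝔗(r,s;G)y dr = 𝔘(t−s)y + ∫ₛᵗ 𝔗(t,r;G)G(r)𝔘(r−s)y dr`. -/
theorem exists_unique_evolution_operator
    {X : Type*} [NormedAddCommGroup X] [InnerProductSpace ℝ X] [CompleteSpace X]
    [TopologicalSpace.SeparableSpace X]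
    (𝔘 : ℝ → (X →L[ℝ] X))
    (h𝔘0 : 𝔘 0 = 1)
    (h𝔘add : ∀ s ≥ (0 : ℝ), ∀ t ≥ (0 : ℝ), 𝔘 (t + s) = 𝔘 t ∘L 𝔘 s)
    (h𝔘cont : ∀ x : X, ContinuousOn (fun t => 𝔘 t x) (Set.Ici 0))
    (T : ℝ) (hT : 0 < T)
    (G : ℝ → (X →L[ℝ] X)) (hG : IsL2OperatorValued T G) :
    ∃ 𝔗 : ℝ → ℝ → (X →L[ℝ] X), IsEvolutionOperator 𝔘 T G 𝔗 ∧
      ∀ 𝔗' : ℝ → ℝ → (X →L[ℝ] X), IsEvolutionOperator 𝔘 T G 𝔗' →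
        ∀ s t : ℝ, 0 ≤ s → s ≤ t → t ≤ T → 𝔗' t s = 𝔗 t s :=
  exists_unique_evolution_operator_general 𝔘 h𝔘0 h𝔘add h𝔘cont T hT G hG
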